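/- Let k ≥ 1 be an integer. For every integer l with −k ≤ l ≤ k−2, the Wirtinger derivative ∂u_{k,l}/∂w̄ := (1/2)(∂_x + i ∂_y)u_{k,l} satisfies ∂u_{k,l}/∂w̄ = ( √((k−l−1)(k−l)(2k+1)) / (2√(2k−1)) ) · u_{k−1, l+1} identically on ℝ³. Moreover, for l ∈ {k−1, k} one has ∂u_{k,l}/∂w̄ ≡ 0. -/

import Mathlib

/-!
In the real-linear coordinates `-w/2`, `w̄/2`, `z` the harmonic `u_{k,l}` is `C_{k,l}` times a sum
of monomials `(-w/2)^p (w̄/2)^q z^s / (p! q! s!)`, and `∂/∂w̄` kills `-w/2` and `z` while sending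
`w̄/2` to `1/2`. So it maps such a monomial to `q/2` times the one with `q` lowered by one; after
the shift `q ↦ q + 1` the factor `q + 1` cancels against `(q + 1)!` and the sum of `u_{k-1,l+1}`
reappears, with the factor `C_{k,l} / (2 C_{k-1,l+1})`, which is the stated constant. For
`l ≥ k - 1` the constraints `p - q = l`, `p + q ≤ k` force `q = 0`, so every term dies.
-/

open MeasureTheory Finset

noncomputable section

/-- The normalizing constant `C_{k,l} = √(((2k+1)/(4π)) · (k+l)! · (k−l)!)`. -/
def sphC (k : ℕ) (l : ℤ) : ℝ :=
  Real.sqrt ((2 * k + 1) / (4 * Real.pi) * ((k : ℤ) + l).toNat.factorial *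
    ((k : ℤ) - l).toNat.factorial)

/-- The solid spherical harmonic `u_{k,l}` on `ℝ³`, with `w = x + iy`:
`u_{k,l} = C_{k,l} Σ_{p+q+s=k, p−q=l} (1/(p!q!s!)) (−w/2)^p (w̄/2)^q z^s`. -/
def uSH (k : ℕ) (l : ℤ) (x : EuclideanSpace ℝ (Fin 3)) : ℂ :=
  (sphC k l : ℂ) *
    ∑ p ∈ Finset.range (k + 1), ∑ q ∈ Finset.range (k + 1),
      if (p : ℤ) - (q : ℤ) = l ∧ p + q ≤ k then
        (1 / ((p.factorial : ℂ) * (q.factorial : ℂ) * ((k - p - q).factorial : ℂ))) *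
          (-(((x 0 : ℂ) + Complex.I * (x 1 : ℂ)) / 2)) ^ p *
          ((((x 0 : ℂ) - Complex.I * (x 1 : ℂ))) / 2) ^ q *
          ((x 2 : ℂ)) ^ (k - p - q)
      else 0

/-- The partial derivative `∂u/∂xᵢ` of a function `u : ℝ³ → ℂ`. -/
def pd (i : Fin 3) (u : EuclideanSpace ℝ (Fin 3) → ℂ) (x : EuclideanSpace ℝ (Fin 3)) : ℂ :=
  fderiv ℝ u x (EuclideanSpace.single i (1 : ℝ))

/-- `|∇u(x)|² = |∂_x u(x)|² + |∂_y u(x)|² + |∂_z u(x)|²`. -/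
def gradSq (u : EuclideanSpace ℝ (Fin 3) → ℂ) (x : EuclideanSpace ℝ (Fin 3)) : ℝ :=
  ‖pd 0 u x‖ ^ 2 + ‖pd 1 u x‖ ^ 2 + ‖pd 2 u x‖ ^ 2

/-- The Wirtinger derivative `∂u/∂w = (1/2)(∂_x − i ∂_y)u`. -/
def dW (u : EuclideanSpace ℝ (Fin 3) → ℂ) (x : EuclideanSpace ℝ (Fin 3)) : ℂ :=
  (1 / 2) * (pd 0 u x - Complex.I * pd 1 u x)

/-- The Wirtinger derivative `∂u/∂w̄ = (1/2)(∂_x + i ∂_y)u`. -/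
def dWbar (u : EuclideanSpace ℝ (Fin 3) → ℂ) (x : EuclideanSpace ℝ (Fin 3)) : ℂ :=
  (1 / 2) * (pd 0 u x + Complex.I * pd 1 u x)

local notation "ℝ³" => EuclideanSpace ℝ (Fin 3)

def coord (i : Fin 3) : ℝ³ →L[ℝ] ℂ := Complex.ofRealCLM.comp (EuclideanSpace.proj i)

def negHalfW : ℝ³ →L[ℝ] ℂ := (-(1 / 2 : ℂ)) • (coord 0 + Complex.I • coord 1)

def halfWbar : ℝ³ →L[ℝ] ℂ := (1 / 2 : ℂ) • (coord 0 - Complex.I • coord 1)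

def wbarPart : (ℝ³ →L[ℝ] ℂ) →ₗ[ℂ] ℂ where
  toFun L := 1 / 2 * (L (EuclideanSpace.single 0 1) + Complex.I * L (EuclideanSpace.single 1 1))
  map_add' L L' := by simp only [add_apply]; ring
  map_smul' c L := by
    simp only [smul_apply, smul_eq_mul, RingHom.id_apply]
    ring

lemma wbarPart_apply (L : ℝ³ →L[ℝ] ℂ) : wbarPart L =
    1 / 2 * (L (EuclideanSpace.single 0 1) + Complex.I * L (EuclideanSpace.single 1 1)) := rfl

lemma dWbar_eq_wbarPart (u : ℝ³ → ℂ) (x : ℝ³) : dWbar u x = wbarPart (fderiv ℝ u x) := rfl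

lemma wbarPart_negHalfW : wbarPart negHalfW = 0 := by
  norm_num [wbarPart_apply, negHalfW, coord, Complex.ext_iff]

lemma wbarPart_halfWbar : wbarPart halfWbar = 1 / 2 := by
  norm_num [wbarPart_apply, halfWbar, coord, Complex.ext_iff]

lemma wbarPart_coord_two : wbarPart (coord 2) = 0 := by
  simp [wbarPart_apply, coord]

def wzMonomial (p q s : ℕ) (x : ℝ³) : ℂ := negHalfW x ^ p * halfWbar x ^ q * coord 2 x ^ s

lemma wzMonomial_apply (p q s : ℕ) (x : ℝ³) : wzMonomial p q s x =
    (-(((x 0 : ℂ) + Complex.I * (x 1 : ℂ)) / 2)) ^ p *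
      (((x 0 : ℂ) - Complex.I * (x 1 : ℂ)) / 2) ^ q * (x 2 : ℂ) ^ s := by
  simp only [wzMonomial, negHalfW, halfWbar, coord, add_apply, sub_apply, smul_apply,
    ContinuousLinearMap.comp_apply, PiLp.proj_apply, Complex.ofRealCLM_apply, smul_eq_mul]
  ring

lemma differentiable_wzMonomial (p q s : ℕ) : Differentiable ℝ (wzMonomial p q s) := by
  unfold wzMonomial; fun_prop

lemma dWbar_wzMonomial (p q s : ℕ) (x : ℝ³) :
    dWbar (wzMonomial p q s) x = q / 2 * wzMonomial p (q - 1) s x := by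
  have h : HasFDerivAt (wzMonomial p q s) _ x :=
    (((negHalfW.hasFDerivAt (x := x)).pow p).fun_mul (halfWbar.hasFDerivAt.pow q)).fun_mul
      ((coord 2).hasFDerivAt.pow s)
  rw [dWbar_eq_wbarPart, h.fderiv]
  simp only [map_add, map_smul, smul_eq_mul, nsmul_eq_mul, wbarPart_negHalfW, wbarPart_halfWbar,
    wbarPart_coord_two, mul_zero, add_zero, zero_add, wzMonomial]
  ring

def shCoeff (k : ℕ) (l : ℤ) (p q : ℕ) : ℂ :=
  if (p : ℤ) - (q : ℤ) = l ∧ p + q ≤ k then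
    1 / ((p.factorial : ℂ) * (q.factorial : ℂ) * ((k - p - q).factorial : ℂ))
  else 0

lemma shCoeff_eq_zero {k : ℕ} {l : ℤ} {p q : ℕ} (h : ¬((p : ℤ) - q = l ∧ p + q ≤ k)) :
    shCoeff k l p q = 0 :=
  if_neg h

lemma natCast_succ_mul_shCoeff_succ (m : ℕ) (l : ℤ) (p q : ℕ) :
    ((q : ℂ) + 1) * shCoeff (m + 1) l p (q + 1) = shCoeff m (l + 1) p q := by
  have hcond : ((p : ℤ) - (q + 1 : ℕ) = l ∧ p + (q + 1) ≤ m + 1) ↔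
      ((p : ℤ) - q = l + 1 ∧ p + q ≤ m) := by
    push_cast; omega
  unfold shCoeff
  by_cases h : (p : ℤ) - q = l + 1 ∧ p + q ≤ m
  · rw [if_pos (hcond.mpr h), if_pos h, show m + 1 - p - (q + 1) = m - p - q by omega,
      Nat.factorial_succ]
    push_cast
    field_simp
  · rw [if_neg (mt hcond.mp h), if_neg h, mul_zero]

lemma uSH_eq_sum (k : ℕ) (l : ℤ) (x : ℝ³) :
    uSH k l x = sphC k l * ∑ p ∈ range (k + 1), ∑ q ∈ range (k + 1),
      shCoeff k l p q * wzMonomial p q (k - p - q) x := by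
  unfold uSH
  congr 1
  refine sum_congr rfl fun p _ => sum_congr rfl fun q _ => ?_
  unfold shCoeff
  split_ifs
  · rw [wzMonomial_apply]; ring
  · rw [zero_mul]

lemma dWbar_uSH_eq_sum (k : ℕ) (l : ℤ) (x : ℝ³) :
    dWbar (uSH k l) x = sphC k l * ∑ p ∈ range (k + 1), ∑ q ∈ range (k + 1),
      shCoeff k l p q * (q / 2 * wzMonomial p (q - 1) (k - p - q) x) := by
  have h : HasFDerivAt (uSH k l) ((sphC k l : ℂ) • ∑ p ∈ range (k + 1), ∑ q ∈ range (k + 1),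
      shCoeff k l p q • fderiv ℝ (wzMonomial p q (k - p - q)) x) x := by
    rw [funext (uSH_eq_sum k l)]
    exact (HasFDerivAt.fun_sum fun p _ => HasFDerivAt.fun_sum fun q _ =>
      ((differentiable_wzMonomial p q (k - p - q) x).hasFDerivAt.const_mul _)).const_mul _
  rw [dWbar_eq_wbarPart, h.fderiv]
  simp only [map_smul, map_sum, smul_eq_mul, ← dWbar_eq_wbarPart, dWbar_wzMonomial]

lemma sum_sum_range_succ_shift {M : Type*} [AddCommMonoid M] (n : ℕ) (F : ℕ → ℕ → M)
    (h0 : ∀ p, F p 0 = 0) (hn : ∀ q, F n (q + 1) = 0) :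
    ∑ p ∈ range (n + 1), ∑ q ∈ range (n + 1), F p q =
      ∑ p ∈ range n, ∑ q ∈ range n, F p (q + 1) := by
  rw [sum_range_succ]
  simp only [sum_range_succ' _ n, h0, hn, add_zero, sum_const_zero]

lemma dWbar_uSH_succ (m : ℕ) (l : ℤ) (x : ℝ³) :
    dWbar (uSH (m + 1) l) x = ((sphC (m + 1) l / 2 : ℝ) : ℂ) *
      ∑ p ∈ range (m + 1), ∑ q ∈ range (m + 1),
        shCoeff m (l + 1) p q * wzMonomial p q (m - p - q) x := by
  rw [dWbar_uSH_eq_sum, sum_sum_range_succ_shift]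
  · simp only [mul_sum, Complex.ofReal_div]
    refine sum_congr rfl fun p _ => sum_congr rfl fun q _ => ?_
    rw [← natCast_succ_mul_shCoeff_succ, show m + 1 - p - (q + 1) = m - p - q by omega,
      Nat.add_sub_cancel]
    push_cast
    ring
  · simp
  · intro q
    rw [shCoeff_eq_zero (by omega), zero_mul]

lemma sphC_succ_div_two (m : ℕ) (l : ℤ) (hl : l + 1 ≤ m) :
    sphC (m + 1) l / 2 =
      Real.sqrt ((((m + 1 : ℕ) : ℝ) - l - 1) * (((m + 1 : ℕ) : ℝ) - l) *
          (2 * ((m + 1 : ℕ) : ℝ) + 1)) / (2 * Real.sqrt (2 * ((m + 1 : ℕ) : ℝ) - 1)) *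
        sphC m (l + 1) := by
  obtain ⟨b, hb⟩ : ∃ b : ℕ, (m : ℤ) - (l + 1) = b := ⟨_, (Int.toNat_of_nonneg (by omega)).symm⟩
  have hsum : ((m + 1 : ℕ) + l : ℤ).toNat = ((m : ℤ) + (l + 1)).toNat := by
    congr 1; push_cast; ring
  have hdiff : ((m + 1 : ℕ) - l : ℤ).toNat = b + 2 := by omega
  have hb' : (m : ℝ) - l = b + 1 := by
    have := congrArg (Int.cast : ℤ → ℝ) hb
    push_cast at this
    linarith
  unfold sphC
  rw [hsum, hdiff, hb, Int.toNat_natCast]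
  set A : ℝ := (((m : ℤ) + (l + 1)).toNat.factorial : ℝ)
  have key : ((b + 1) * (b + 2) * (2 * m + 3)) * ((2 * m + 1) / (4 * Real.pi) * A * b.factorial) =
      (2 * m + 1) * ((2 * m + 3) / (4 * Real.pi) * A * (b + 2).factorial) := by
    rw [Nat.factorial_succ, Nat.factorial_succ]; push_cast; ring
  have e1 : ((m + 1 : ℕ) : ℝ) - l - 1 = b + 1 := by push_cast; linarith
  have e2 : ((m + 1 : ℕ) : ℝ) - l = b + 2 := by push_cast; linarith
  have e3 : 2 * ((m + 1 : ℕ) : ℝ) - 1 = 2 * m + 1 := by push_cast; ring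
  have e4 : 2 * ((m + 1 : ℕ) : ℝ) + 1 = 2 * m + 3 := by push_cast; ring
  rw [e1, e2, e3, e4, div_mul_eq_mul_div (Real.sqrt _), ← Real.sqrt_mul (by positivity), key,
    Real.sqrt_mul (show (0 : ℝ) ≤ 2 * m + 1 by positivity), mul_comm (2 : ℝ) (Real.sqrt _),
    mul_div_mul_left _ _ (by positivity)]

theorem dWbar_uSH_general (k : ℕ) :
    (∀ l : ℤ, -(k : ℤ) ≤ l → l ≤ (k : ℤ) - 2 → ∀ x : EuclideanSpace ℝ (Fin 3),
      dWbar (uSH k l) x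
        = ((Real.sqrt (((k : ℝ) - l - 1) * ((k : ℝ) - l) * (2 * (k : ℝ) + 1))
            / (2 * Real.sqrt (2 * (k : ℝ) - 1)) : ℝ) : ℂ) * uSH (k - 1) (l + 1) x) ∧
    (∀ l : ℤ, (l = (k : ℤ) - 1 ∨ l = (k : ℤ)) → ∀ x : EuclideanSpace ℝ (Fin 3),
      dWbar (uSH k l) x = 0) := by
  refine ⟨fun l hkl hlk x => ?_, fun l hl x => ?_⟩
  · obtain ⟨m, rfl⟩ : ∃ m, k = m + 1 := ⟨k - 1, by omega⟩
    rw [dWbar_uSH_succ, sphC_succ_div_two m l (by omega), Nat.add_sub_cancel, uSH_eq_sum]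
    push_cast
    ring
  · rw [dWbar_uSH_eq_sum, sum_eq_zero fun p _ => sum_eq_zero fun q _ => ?_, mul_zero]
    rcases q with _ | q
    · simp
    · rw [shCoeff_eq_zero (by omega), zero_mul]

/-- The Wirtinger derivative `∂u_{k,l}/∂w̄` lowers `k` and raises `l`:
`∂u_{k,l}/∂w̄ = (√((k−l−1)(k−l)(2k+1))/(2√(2k−1))) u_{k−1,l+1}` for `−k ≤ l ≤ k−2`,
and `∂u_{k,l}/∂w̄ ≡ 0` for `l ∈ {k−1, k}`. -/
theorem dWbar_uSH (k : ℕ) (hk : 1 ≤ k) :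
    (∀ l : ℤ, -(k : ℤ) ≤ l → l ≤ (k : ℤ) - 2 → ∀ x : EuclideanSpace ℝ (Fin 3),
      dWbar (uSH k l) x
        = ((Real.sqrt (((k : ℝ) - l - 1) * ((k : ℝ) - l) * (2 * (k : ℝ) + 1))
            / (2 * Real.sqrt (2 * (k : ℝ) - 1)) : ℝ) : ℂ) * uSH (k - 1) (l + 1) x) ∧
    (∀ l : ℤ, (l = (k : ℤ) - 1 ∨ l = (k : ℤ)) → ∀ x : EuclideanSpace ℝ (Fin 3),
      dWbar (uSH k l) x = 0) :=
  dWbar_uSH_general k
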